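/- In the coordinate transport setting, for every x ∈ Ω and all indices i, j: Σ_{p,q} Φ^{pq} Φ_{ijpq} − Σ_p W^p Φ_{pij} = −V_{ij} + Ŵ_{ij} + g_{ij}, that is, L[Φ_{ij}] = −V_{ij} + Ŵ_{ij} + g_{ij}, where L is the weighted Laplacian. -/

import Mathlib

noncomputable section
open scoped BigOperators
open Filter MeasureTheory

/-- Partial derivative `∂_i f`. -/
def pd {n : ℕ} (f : (Fin n → ℝ) → ℝ) (i : Fin n) : (Fin n → ℝ) → ℝ :=
  fun x => fderiv ℝ f x (Pi.single i 1)

/-- Second partial derivative `f_{ij}`. -/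
def pd2 {n : ℕ} (f : (Fin n → ℝ) → ℝ) (i j : Fin n) : (Fin n → ℝ) → ℝ :=
  pd (pd f i) j

/-- Third partial derivative `f_{ijk}`. -/
def pd3 {n : ℕ} (f : (Fin n → ℝ) → ℝ) (i j k : Fin n) : (Fin n → ℝ) → ℝ :=
  pd (pd2 f i j) k

/-- Fourth partial derivative `f_{ijkl}`. -/
def pd4 {n : ℕ} (f : (Fin n → ℝ) → ℝ) (i j k l : Fin n) : (Fin n → ℝ) → ℝ :=
  pd (pd3 f i j k) l

/-- Fifth partial derivative. -/
def pd5 {n : ℕ} (f : (Fin n → ℝ) → ℝ) (i j k l m : Fin n) : (Fin n → ℝ) → ℝ :=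
  pd (pd4 f i j k l) m

/-- The Hessian matrix `D²Φ(x)`, with entries `Φ_{ij}(x)`. -/
def hess {n : ℕ} (Φ : (Fin n → ℝ) → ℝ) (x : Fin n → ℝ) : Matrix (Fin n) (Fin n) ℝ :=
  Matrix.of fun i j => pd2 Φ i j x

/-- The inverse Hessian matrix, with entries `Φ^{ij}(x)`. -/
def ihess {n : ℕ} (Φ : (Fin n → ℝ) → ℝ) (x : Fin n → ℝ) : Matrix (Fin n) (Fin n) ℝ :=
  (hess Φ x)⁻¹

/-- The gradient `∇Φ(x)`. -/
def grad {n : ℕ} (Φ : (Fin n → ℝ) → ℝ) (x : Fin n → ℝ) : Fin n → ℝ :=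
  fun i => pd Φ i x

/-- The Calabi tensor `g_{ij} = Σ Φ_{iab} Φ_{jcd} Φ^{ac} Φ^{bd}`. -/
def calabi {n : ℕ} (Φ : (Fin n → ℝ) → ℝ) (i j : Fin n) (x : Fin n → ℝ) : ℝ :=
  ∑ a, ∑ b, ∑ c, ∑ d,
    pd3 Φ i a b x * pd3 Φ j c d x * ihess Φ x a c * ihess Φ x b d

/-- `W^i := (∂_i W)(∇Φ)`. -/
def Wop {n : ℕ} (Φ W : (Fin n → ℝ) → ℝ) (i : Fin n) (x : Fin n → ℝ) : ℝ :=
  pd W i (grad Φ x)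

/-- `Ŵ_{ij} := Σ_{a,b} W^{ab} Φ_{ai} Φ_{bj}` where `W^{ab} = (∂²_{ab}W)(∇Φ)`. -/
def What2 {n : ℕ} (Φ W : (Fin n → ℝ) → ℝ) (i j : Fin n) (x : Fin n → ℝ) : ℝ :=
  ∑ a, ∑ b, pd2 W a b (grad Φ x) * pd2 Φ a i x * pd2 Φ b j x

/-- `Ŵ_{ijk} := Σ_{a,b,c} W^{abc} Φ_{ai} Φ_{bj} Φ_{ck}` where `W^{abc} = (∂³_{abc}W)(∇Φ)`. -/
def What3 {n : ℕ} (Φ W : (Fin n → ℝ) → ℝ) (i j k : Fin n) (x : Fin n → ℝ) : ℝ :=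
  ∑ a, ∑ b, ∑ c, pd3 W a b c (grad Φ x) * pd2 Φ a i x * pd2 Φ b j x * pd2 Φ c k x

/-- Christoffel symbols `Γ^k_{pq} = ½ Σ_m Φ^{km} Φ_{mpq}` of the Hessian metric. -/
def Γh {n : ℕ} (Φ : (Fin n → ℝ) → ℝ) (k p q : Fin n) (x : Fin n → ℝ) : ℝ :=
  (1/2) * ∑ m, ihess Φ x k m * pd3 Φ m p q x

/-- Covariant derivative of a (0,1)-tensor: `(∇T)_{p i}`. -/
def covD1 {n : ℕ} (Φ : (Fin n → ℝ) → ℝ) (T : Fin n → (Fin n → ℝ) → ℝ)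
    (p i : Fin n) (x : Fin n → ℝ) : ℝ :=
  pd (T i) p x - ∑ m, Γh Φ m p i x * T m x

/-- Covariant derivative of a (0,2)-tensor: `(∇T)_{p i j}`. -/
def covD2 {n : ℕ} (Φ : (Fin n → ℝ) → ℝ) (T : Fin n → Fin n → (Fin n → ℝ) → ℝ)
    (p i j : Fin n) (x : Fin n → ℝ) : ℝ :=
  pd (T i j) p x - ∑ m, Γh Φ m p i x * T m j x - ∑ m, Γh Φ m p j x * T i m x

/-- Covariant derivative of a (0,3)-tensor: `(∇T)_{p i j k}`. -/
def covD3 {n : ℕ} (Φ : (Fin n → ℝ) → ℝ) (T : Fin n → Fin n → Fin n → (Fin n → ℝ) → ℝ)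
    (p i j k : Fin n) (x : Fin n → ℝ) : ℝ :=
  pd (T i j k) p x - ∑ m, Γh Φ m p i x * T m j k x - ∑ m, Γh Φ m p j x * T i m k x
    - ∑ m, Γh Φ m p k x * T i j m x

/-- Covariant derivative of a (0,4)-tensor: `(∇T)_{p i j k l}`. -/
def covD4 {n : ℕ} (Φ : (Fin n → ℝ) → ℝ)
    (T : Fin n → Fin n → Fin n → Fin n → (Fin n → ℝ) → ℝ)
    (p i j k l : Fin n) (x : Fin n → ℝ) : ℝ :=
  pd (T i j k l) p x - ∑ m, Γh Φ m p i x * T m j k l x - ∑ m, Γh Φ m p j x * T i m k l x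
    - ∑ m, Γh Φ m p k x * T i j m l x - ∑ m, Γh Φ m p l x * T i j k m x

/-- Weighted tensor Laplacian of a (0,1)-tensor:
`(LT)_i = Σ Φ^{pq}(∇∇T)_{pq i} − ½ Σ_p (Σ_m Φ^{pm} V_m + W^p)(∇T)_{p i}`. -/
def LT1 {n : ℕ} (Φ V W : (Fin n → ℝ) → ℝ) (T : Fin n → (Fin n → ℝ) → ℝ)
    (i : Fin n) (x : Fin n → ℝ) : ℝ :=
  (∑ p, ∑ q, ihess Φ x p q * covD2 Φ (covD1 Φ T) p q i x)
    - (1/2) * ∑ p, ((∑ m, ihess Φ x p m * pd V m x) + Wop Φ W p x) * covD1 Φ T p i x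

/-- Weighted tensor Laplacian of a (0,2)-tensor. -/
def LT2 {n : ℕ} (Φ V W : (Fin n → ℝ) → ℝ) (T : Fin n → Fin n → (Fin n → ℝ) → ℝ)
    (i j : Fin n) (x : Fin n → ℝ) : ℝ :=
  (∑ p, ∑ q, ihess Φ x p q * covD3 Φ (covD2 Φ T) p q i j x)
    - (1/2) * ∑ p, ((∑ m, ihess Φ x p m * pd V m x) + Wop Φ W p x) * covD2 Φ T p i j x

/-- Weighted tensor Laplacian of a (0,3)-tensor. -/
def LT3 {n : ℕ} (Φ V W : (Fin n → ℝ) → ℝ) (T : Fin n → Fin n → Fin n → (Fin n → ℝ) → ℝ)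
    (i j k : Fin n) (x : Fin n → ℝ) : ℝ :=
  (∑ p, ∑ q, ihess Φ x p q * covD4 Φ (covD3 Φ T) p q i j k x)
    - (1/2) * ∑ p, ((∑ m, ihess Φ x p m * pd V m x) + Wop Φ W p x) * covD3 Φ T p i j k x

/-- `N_{piab} := Φ_{piab} − ½ Σ_{k,m} Φ^{km}(Φ_{mpi}Φ_{kab} + Φ_{mpa}Φ_{kib} + Φ_{mpb}Φ_{kia})`. -/
def Ncal {n : ℕ} (Φ : (Fin n → ℝ) → ℝ) (p i a b : Fin n) (x : Fin n → ℝ) : ℝ :=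
  pd4 Φ p i a b x - (1/2) * ∑ k, ∑ m, ihess Φ x k m *
    (pd3 Φ m p i x * pd3 Φ k a b x + pd3 Φ m p a x * pd3 Φ k i b x
      + pd3 Φ m p b x * pd3 Φ k i a x)

/-- Riemann curvature `R_{ikjl} := ¼ Σ_{a,m} Φ^{am}(Φ_{ila}Φ_{mkj} − Φ_{ija}Φ_{mkl})`. -/
def Rcal {n : ℕ} (Φ : (Fin n → ℝ) → ℝ) (i k j l : Fin n) (x : Fin n → ℝ) : ℝ :=
  (1/4) * ∑ a, ∑ m, ihess Φ x a m *
    (pd3 Φ i l a x * pd3 Φ m k j x - pd3 Φ i j a x * pd3 Φ m k l x)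

/-- The `h`-norm of a quadratic form `Q` at `x`:
`‖Q‖_h(x) = sup { Σ Q_{ij} v_i v_j : Σ Φ_{ij}(x) v_i v_j = 1 }`. -/
def hnorm {n : ℕ} (Φ : (Fin n → ℝ) → ℝ) (Q : Fin n → Fin n → ℝ) (x : Fin n → ℝ) : ℝ :=
  sSup {r | ∃ v : Fin n → ℝ,
    (∑ i, ∑ j, pd2 Φ i j x * v i * v j) = 1 ∧ r = ∑ i, ∑ j, Q i j * v i * v j}

/-- The matrix `A(x)` with entries `V_{ab} + Ŵ_{ab}`. -/
def Amat {n : ℕ} (Φ V W : (Fin n → ℝ) → ℝ) (x : Fin n → ℝ) : Matrix (Fin n) (Fin n) ℝ :=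
  Matrix.of fun a b => pd2 V a b x + What2 Φ W a b x

/-- The matrix `S_i(x)` with entries `V_{iab} − Ŵ_{iab}`. -/
def Smat {n : ℕ} (Φ V W : (Fin n → ℝ) → ℝ) (i : Fin n) (x : Fin n → ℝ) :
    Matrix (Fin n) (Fin n) ℝ :=
  Matrix.of fun a b => pd3 V i a b x - What3 Φ W i a b x

/-- `H_{ij}(x) := Tr[A(x)⁻¹ · S_i(x) · (D²Φ(x))⁻¹ · S_j(x)]`. -/
def Hten {n : ℕ} (Φ V W : (Fin n → ℝ) → ℝ) (i j : Fin n) (x : Fin n → ℝ) : ℝ :=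
  ((Amat Φ V W x)⁻¹ * Smat Φ V W i x * (hess Φ x)⁻¹ * Smat Φ V W j x).trace

/-- Euclidean operator norm of a matrix. -/
def eOpNorm {n : ℕ} (M : Matrix (Fin n) (Fin n) ℝ) : ℝ :=
  ‖LinearMap.toContinuousLinearMap (Matrix.toEuclideanLin M)‖

/-- Directional derivative of the Hessian: the matrix `∂_e D²F(x)`. -/
def dirHess {n : ℕ} (F : (Fin n → ℝ) → ℝ) (e : Fin n → ℝ) (x : Fin n → ℝ) :
    Matrix (Fin n) (Fin n) ℝ :=
  Matrix.of fun i j => ∑ k, e k * pd3 F k i j x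

/-- The quadratic form `⟨Qy, y⟩`. -/
def qform {n : ℕ} (Q : Matrix (Fin n) (Fin n) ℝ) (y : Fin n → ℝ) : ℝ :=
  ∑ i, ∑ j, Q i j * y j * y i

/-!
Taking logarithms in the Monge–Ampère equation gives `V = W ∘ ∇Φ - log det D²Φ` on `Ω`.
Differentiating once, with Jacobi's formula `∂ log det H = tr (H⁻¹ ∂H)`, gives
`V_i = W^a Φ_{ai} - Φ^{pq} Φ_{ipq}`. Differentiating again, the chain rule turns `∂_j W^a` into
`Ŵ_{ij}`, and `∂_j H⁻¹ = -H⁻¹ (∂_j H) H⁻¹` turns `(∂_j Φ^{pq}) Φ_{ipq}` into `-g_{ij}`; the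
symmetry of the higher derivatives of `Φ` then puts the remaining terms in the stated form.
-/

open Topology

section PartialDerivatives

variable {n : ℕ} {f g : (Fin n → ℝ) → ℝ} {x : Fin n → ℝ}

theorem HasFDerivAt.pd_eq {L : (Fin n → ℝ) →L[ℝ] ℝ} (h : HasFDerivAt f L x) (i : Fin n) :
    pd f i x = L (Pi.single i 1) := by
  unfold pd; rw [h.fderiv]

theorem Filter.EventuallyEq.pd_eq (h : f =ᶠ[𝓝 x] g) (i : Fin n) : pd f i x = pd g i x := by
  unfold pd; rw [h.fderiv_eq]

theorem pd_const (c : ℝ) (i : Fin n) : pd (fun _ => c) i x = 0 := by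
  simp [pd]

theorem pd_sub (hf : DifferentiableAt ℝ f x) (hg : DifferentiableAt ℝ g x) (i : Fin n) :
    pd (fun y => f y - g y) i x = pd f i x - pd g i x := by
  simp [pd, fderiv_fun_sub hf hg]

theorem pd_mul (hf : DifferentiableAt ℝ f x) (hg : DifferentiableAt ℝ g x) (i : Fin n) :
    pd (fun y => f y * g y) i x = pd f i x * g x + f x * pd g i x := by
  simp [pd, fderiv_fun_mul hf hg, mul_comm, add_comm]

theorem pd_const_mul (c : ℝ) (hf : DifferentiableAt ℝ f x) (i : Fin n) :
    pd (fun y => c * f y) i x = c * pd f i x := by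
  simp [pd, fderiv_const_mul hf]

theorem pd_sum {ι : Type*} {s : Finset ι} {F : ι → (Fin n → ℝ) → ℝ}
    (hF : ∀ a ∈ s, DifferentiableAt ℝ (F a) x) (i : Fin n) :
    pd (fun y => ∑ a ∈ s, F a y) i x = ∑ a ∈ s, pd (F a) i x := by
  simp [pd, fderiv_fun_sum hF]

theorem pd_prod {ι : Type*} [DecidableEq ι] {s : Finset ι} {F : ι → (Fin n → ℝ) → ℝ}
    (hF : ∀ a ∈ s, DifferentiableAt ℝ (F a) x) (i : Fin n) :
    pd (fun y => ∏ a ∈ s, F a y) i x = ∑ a ∈ s, (∏ b ∈ s.erase a, F b x) * pd (F a) i x := by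
  rw [(HasFDerivAt.finsetProd fun a ha => (hF a ha).hasFDerivAt).pd_eq]
  simp [pd]

theorem pd_log (hf : DifferentiableAt ℝ f x) (hfx : f x ≠ 0) (i : Fin n) :
    pd (fun y => Real.log (f y)) i x = (f x)⁻¹ * pd f i x := by
  rw [(hf.hasFDerivAt.log hfx).pd_eq]
  simp [pd]

theorem hasFDerivAt_grad {Φ : (Fin n → ℝ) → ℝ} (hΦ : ∀ a, DifferentiableAt ℝ (pd Φ a) x) :
    HasFDerivAt (grad Φ) (ContinuousLinearMap.pi fun a => fderiv ℝ (pd Φ a) x) x :=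
  hasFDerivAt_pi.2 fun a => (hΦ a).hasFDerivAt

theorem pd_comp_grad {Φ F : (Fin n → ℝ) → ℝ} (hΦ : ∀ a, DifferentiableAt ℝ (pd Φ a) x)
    (hF : DifferentiableAt ℝ F (grad Φ x)) (i : Fin n) :
    pd (fun y => F (grad Φ y)) i x = ∑ a, pd F a (grad Φ x) * pd2 Φ a i x := by
  rw [HasFDerivAt.pd_eq (f := fun y => F (grad Φ y))
      (hF.hasFDerivAt.comp x (hasFDerivAt_grad hΦ)), ContinuousLinearMap.comp_apply,
    pi_eq_sum_univ' (ContinuousLinearMap.pi _ _), map_sum]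
  simp [pd, pd2, mul_comm]

end PartialDerivatives

section HigherDerivatives

variable {n : ℕ} {f : (Fin n → ℝ) → ℝ} {x : Fin n → ℝ}

theorem ContDiffAt.contDiffAt_pd {k m : WithTop ℕ∞} (hf : ContDiffAt ℝ k f x) (hm : m + 1 ≤ k)
    (i : Fin n) : ContDiffAt ℝ m (pd f i) x :=
  (hf.fderiv_right hm).clm_apply contDiffAt_const

theorem ContDiffAt.differentiableAt_pd {k : WithTop ℕ∞} (hf : ContDiffAt ℝ k f x) (hk : 2 ≤ k)
    (i : Fin n) : DifferentiableAt ℝ (pd f i) x :=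
  (hf.contDiffAt_pd (m := 1) hk i).differentiableAt one_ne_zero

theorem ContDiffAt.differentiableAt_pd2 (hf : ContDiffAt ℝ 3 f x) (i j : Fin n) :
    DifferentiableAt ℝ (pd2 f i j) x :=
  (hf.contDiffAt_pd (m := 2) (by norm_num) i).differentiableAt_pd le_rfl j

theorem ContDiffAt.differentiableAt_pd3 (hf : ContDiffAt ℝ 4 f x) (i j k : Fin n) :
    DifferentiableAt ℝ (pd3 f i j k) x :=
  (hf.contDiffAt_pd (m := 3) (by norm_num) i).differentiableAt_pd2 j k

theorem pd2_comm (hf : ContDiffAt ℝ 2 f x) (i j : Fin n) : pd2 f i j x = pd2 f j i x := by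
  have hsymm : IsSymmSndFDerivAt ℝ f x :=
    hf.isSymmSndFDerivAt (by simp [minSmoothness_of_isRCLikeNormedField])
  have hdiff : DifferentiableAt ℝ (fderiv ℝ f) x :=
    (hf.fderiv_right (m := 1) le_rfl).differentiableAt one_ne_zero
  have hpd : ∀ v w : Fin n → ℝ,
      fderiv ℝ (fun y => fderiv ℝ f y v) x w = fderiv ℝ (fderiv ℝ f) x w v := fun v w => by
    rw [fderiv_clm_apply hdiff (differentiableAt_const v)]
    simp
  change fderiv ℝ (fun y => fderiv ℝ f y (Pi.single i 1)) x (Pi.single j 1)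
    = fderiv ℝ (fun y => fderiv ℝ f y (Pi.single j 1)) x (Pi.single i 1)
  rw [hpd, hpd]
  exact hsymm.eq _ _

theorem pd3_rotate (hf : ContDiffAt ℝ 3 f x) (a b c : Fin n) :
    pd3 f a b c x = pd3 f c a b x := by
  have hswap : pd2 f a c =ᶠ[𝓝 x] pd2 f c a :=
    (hf.eventually (by simp)).mono fun y hy => pd2_comm (hy.of_le (by norm_num)) a c
  calc pd3 f a b c x = pd2 (pd f a) c b x :=
        pd2_comm (f := pd f a) (hf.contDiffAt_pd le_rfl a) b c
    _ = pd3 f c a b x := hswap.pd_eq b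

end HigherDerivatives

section MatrixCalculus

variable {n : ℕ} {ι : Type*} [Fintype ι] [DecidableEq ι]
  {M : (Fin n → ℝ) → Matrix ι ι ℝ} {x : Fin n → ℝ}

theorem Matrix.inv_apply_eq_inv_det_mul_adjugate {K : Type*} [Field K] (A : Matrix ι ι K)
    (p q : ι) :
    A⁻¹ p q = A.det⁻¹ * A.adjugate p q := by
  simp [Matrix.inv_def, Ring.inverse_eq_inv']

theorem differentiableAt_det (hM : ∀ p q, DifferentiableAt ℝ (fun y => M y p q) x) :
    DifferentiableAt ℝ (fun y => (M y).det) x := by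
  simp only [Matrix.det_apply']
  fun_prop

theorem pd_det (hM : ∀ p q, DifferentiableAt ℝ (fun y => M y p q) x) (j : Fin n) :
    pd (fun y => (M y).det) j x
      = ∑ k, ∑ p, (M x).adjugate k p * pd (fun y => M y p k) j x := by
  -- differentiating the `k`-th factor of each product differentiates the `k`-th column,
  -- and Cramer's rule expands the resulting determinant along that column
  have hcol : ∀ k, ∑ σ : Equiv.Perm ι, ((Equiv.Perm.sign σ : ℤ) : ℝ) *
      ((∏ i ∈ Finset.univ.erase k, M x (σ i) i) * pd (fun y => M y (σ k) k) j x)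
      = ((M x).updateCol k fun p => pd (fun y => M y p k) j x).det := fun k => by
    rw [Matrix.det_apply']
    refine Finset.sum_congr rfl fun σ _ => ?_
    rw [← Finset.mul_prod_erase _ _ (Finset.mem_univ k), Matrix.updateCol_self,
      Finset.prod_congr rfl fun i hi => Matrix.updateCol_ne (Finset.ne_of_mem_erase hi)]
    ring
  have hterm : ∀ σ : Equiv.Perm ι,
      pd (fun y => ((Equiv.Perm.sign σ : ℤ) : ℝ) * ∏ i, M y (σ i) i) j x
        = ∑ k, ((Equiv.Perm.sign σ : ℤ) : ℝ) *
          ((∏ i ∈ Finset.univ.erase k, M x (σ i) i) * pd (fun y => M y (σ k) k) j x) :=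
    fun σ => by
      rw [pd_const_mul _ (by fun_prop), pd_prod fun i _ => hM _ _, Finset.mul_sum]
  simp only [Matrix.det_apply']
  rw [pd_sum fun σ _ => by fun_prop, Finset.sum_congr rfl fun σ _ => hterm σ, Finset.sum_comm]
  refine Finset.sum_congr rfl fun k _ => ?_
  rw [hcol, ← Matrix.cramer_apply, Matrix.cramer_eq_adjugate_mulVec]
  rfl

theorem differentiableAt_inv_apply (hM : ∀ p q, DifferentiableAt ℝ (fun y => M y p q) x)
    (hdet : (M x).det ≠ 0) (p q : ι) : DifferentiableAt ℝ (fun y => (M y)⁻¹ p q) x := by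
  simp only [Matrix.inv_apply_eq_inv_det_mul_adjugate, Matrix.adjugate_apply]
  exact ((differentiableAt_det hM).inv hdet).mul (differentiableAt_det fun a b => by
    by_cases h : a = q <;> simp [Matrix.updateRow_apply, h, hM a b])

theorem pd_inv_apply (hM : ∀ p q, DifferentiableAt ℝ (fun y => M y p q) x)
    (hunit : ∀ᶠ y in 𝓝 x, IsUnit (M y).det) (j : Fin n) (k m : ι) :
    pd (fun y => (M y)⁻¹ k m) j x
      = -∑ p, ∑ q, (M x)⁻¹ k p * pd (fun y => M y p q) j x * (M x)⁻¹ q m := by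
  have hinv := differentiableAt_inv_apply hM hunit.self_of_nhds.ne_zero
  set D : Matrix ι ι ℝ := Matrix.of fun p q => pd (fun y => M y p q) j x
  set E : Matrix ι ι ℝ := Matrix.of fun p q => pd (fun y => (M y)⁻¹ p q) j x
  -- differentiate `M * M⁻¹ = 1`, which holds near `x`
  have hprod : M x * E = -(D * (M x)⁻¹) := by
    ext p q
    have hone : (fun y => ∑ r, M y p r * (M y)⁻¹ r q) =ᶠ[𝓝 x] fun _ => (1 : Matrix ι ι ℝ) p q :=
      hunit.mono fun y hy => by
        beta_reduce
        rw [← Matrix.mul_apply, Matrix.mul_nonsing_inv _ hy]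
    have h := hone.pd_eq j
    rw [pd_sum (F := fun r y => M y p r * (M y)⁻¹ r q) fun r _ => (hM p r).fun_mul (hinv r q),
      pd_const] at h
    simp only [pd_mul (hM _ _) (hinv _ _), Finset.sum_add_distrib] at h
    simp only [Matrix.mul_apply, Matrix.neg_apply, D, E, Matrix.of_apply]
    linarith
  have hE : E = -((M x)⁻¹ * D * (M x)⁻¹) := by
    rw [← Matrix.nonsing_inv_mul_cancel_left (M x) E hunit.self_of_nhds, hprod, Matrix.mul_neg,
      Matrix.mul_assoc]
  have hkm := congrFun (congrFun hE k) m
  simp only [E, D, Matrix.of_apply, Matrix.neg_apply, Matrix.mul_apply, Finset.sum_mul] at hkm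
  rw [hkm, Finset.sum_comm]

end MatrixCalculus

section MongeAmpere

variable {n : ℕ} {Φ V W : (Fin n → ℝ) → ℝ} {x : Fin n → ℝ}

theorem ihess_comm (hΦ : ContDiffAt ℝ 2 Φ x) (p q : Fin n) : ihess Φ x p q = ihess Φ x q p := by
  have hsymm : (hess Φ x).transpose = hess Φ x := by
    ext a b
    exact pd2_comm hΦ b a
  rw [ihess, ← Matrix.transpose_apply ((hess Φ x)⁻¹), Matrix.transpose_nonsing_inv, hsymm]

theorem differentiableAt_hess_apply (hΦ : ContDiffAt ℝ 3 Φ x) (p q : Fin n) :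
    DifferentiableAt ℝ (fun y => hess Φ y p q) x :=
  hΦ.differentiableAt_pd2 p q

theorem differentiableAt_ihess_apply (hΦ : ContDiffAt ℝ 3 Φ x) (hdet : (hess Φ x).det ≠ 0)
    (p q : Fin n) : DifferentiableAt ℝ (fun y => ihess Φ y p q) x :=
  differentiableAt_inv_apply (differentiableAt_hess_apply hΦ) hdet p q

theorem differentiableAt_Wop (hΦ : ContDiffAt ℝ 2 Φ x) (hW : ContDiff ℝ 2 W) (a : Fin n) :
    DifferentiableAt ℝ (Wop Φ W a) x :=
  (hW.contDiffAt.differentiableAt_pd le_rfl a).comp x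
    (hasFDerivAt_grad (hΦ.differentiableAt_pd le_rfl)).differentiableAt

theorem pd_Wop (hΦ : ContDiffAt ℝ 2 Φ x) (hW : ContDiff ℝ 2 W) (a j : Fin n) :
    pd (Wop Φ W a) j x = ∑ b, pd2 W a b (grad Φ x) * pd2 Φ b j x :=
  pd_comp_grad (F := pd W a) (hΦ.differentiableAt_pd le_rfl)
    (hW.contDiffAt.differentiableAt_pd le_rfl a) j

theorem pd_ihess (hΦ : ContDiffAt ℝ 3 Φ x) (hunit : ∀ᶠ y in 𝓝 x, IsUnit (hess Φ y).det)
    (j p q : Fin n) :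
    pd (fun y => ihess Φ y p q) j x = -∑ k, ∑ l, ihess Φ x p k * pd3 Φ k l j x * ihess Φ x l q :=
  pd_inv_apply (differentiableAt_hess_apply hΦ) hunit j p q

theorem pd_log_det_hess (hΦ : ContDiffAt ℝ 3 Φ x) (hdet : (hess Φ x).det ≠ 0) (i : Fin n) :
    pd (fun y => Real.log (hess Φ y).det) i x = ∑ p, ∑ q, ihess Φ x p q * pd3 Φ i p q x := by
  rw [pd_log (differentiableAt_det (differentiableAt_hess_apply hΦ)) hdet,
    pd_det (differentiableAt_hess_apply hΦ), Finset.mul_sum]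
  refine Finset.sum_congr rfl fun p _ => ?_
  rw [Finset.mul_sum]
  refine Finset.sum_congr rfl fun q _ => ?_
  have hsymm : pd (fun y => hess Φ y q p) i x = pd3 Φ i p q x :=
    (pd3_rotate hΦ q p i).trans (pd2_comm (hΦ.contDiffAt_pd (m := 2) (by norm_num) i) q p)
  rw [ihess, Matrix.inv_apply_eq_inv_det_mul_adjugate, hsymm, mul_assoc]

theorem det_hess_pos_of_mongeAmpere
    (hMA : Real.exp (-V x) = Real.exp (-W (grad Φ x)) * (hess Φ x).det) :
    0 < (hess Φ x).det :=
  pos_of_mul_pos_right (hMA ▸ Real.exp_pos (-V x)) (Real.exp_pos _).le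

theorem eq_sub_log_det_hess_of_mongeAmpere
    (hMA : Real.exp (-V x) = Real.exp (-W (grad Φ x)) * (hess Φ x).det) :
    V x = W (grad Φ x) - Real.log (hess Φ x).det := by
  have h := congrArg Real.log hMA
  rw [Real.log_exp, Real.log_mul (Real.exp_ne_zero _) (det_hess_pos_of_mongeAmpere hMA).ne',
    Real.log_exp] at h
  linarith

theorem pd_eq_of_mongeAmpere (hΦ : ContDiffAt ℝ 3 Φ x) (hW : DifferentiableAt ℝ W (grad Φ x))
    (hMA : ∀ᶠ y in 𝓝 x, Real.exp (-V y) = Real.exp (-W (grad Φ y)) * (hess Φ y).det)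
    (i : Fin n) :
    pd V i x = ∑ a, Wop Φ W a x * pd2 Φ a i x - ∑ p, ∑ q, ihess Φ x p q * pd3 Φ i p q x := by
  have hdet := (det_hess_pos_of_mongeAmpere hMA.self_of_nhds).ne'
  have hgrad : ∀ a, DifferentiableAt ℝ (pd Φ a) x := hΦ.differentiableAt_pd (by norm_num)
  have hV : V =ᶠ[𝓝 x] fun y => W (grad Φ y) - Real.log (hess Φ y).det :=
    hMA.mono fun y hy => eq_sub_log_det_hess_of_mongeAmpere hy
  have hWgrad : DifferentiableAt ℝ (fun y => W (grad Φ y)) x :=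
    hW.comp x (hasFDerivAt_grad hgrad).differentiableAt
  rw [hV.pd_eq, pd_sub hWgrad ((differentiableAt_det (differentiableAt_hess_apply hΦ)).log hdet),
    pd_comp_grad hgrad hW, pd_log_det_hess hΦ hdet]
  rfl

theorem pd_sum_Wop_mul_pd2 (hΦ : ContDiffAt ℝ 3 Φ x) (hW : ContDiff ℝ 2 W) (i j : Fin n) :
    pd (fun y => ∑ a, Wop Φ W a y * pd2 Φ a i y) j x
      = What2 Φ W i j x + ∑ p, Wop Φ W p x * pd3 Φ p i j x := by
  have hΦ2 : ContDiffAt ℝ 2 Φ x := hΦ.of_le (by norm_num)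
  have hWop := differentiableAt_Wop hΦ2 hW
  have hpd2 : ∀ a, DifferentiableAt ℝ (pd2 Φ a i) x := fun a => hΦ.differentiableAt_pd2 a i
  rw [pd_sum fun a _ => (hWop a).fun_mul (hpd2 a), What2, ← Finset.sum_add_distrib]
  refine Finset.sum_congr rfl fun a _ => ?_
  rw [pd_mul (hWop a) (hpd2 a), pd_Wop hΦ2 hW, Finset.sum_mul]
  congr 1
  exact Finset.sum_congr rfl fun b _ => by ring

theorem pd_sum_ihess_mul_pd3 (hΦ : ContDiffAt ℝ 4 Φ x)
    (hunit : ∀ᶠ y in 𝓝 x, IsUnit (hess Φ y).det) (i j : Fin n) :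
    pd (fun y => ∑ p, ∑ q, ihess Φ y p q * pd3 Φ i p q y) j x
      = -calabi Φ i j x + ∑ p, ∑ q, ihess Φ x p q * pd4 Φ i j p q x := by
  have hΦ3 : ContDiffAt ℝ 3 Φ x := hΦ.of_le (by norm_num)
  have hihess := differentiableAt_ihess_apply hΦ3 hunit.self_of_nhds.ne_zero
  have hpd3 := hΦ.differentiableAt_pd3 i
  have hpd4 : ∀ p q, pd (pd3 Φ i p q) j x = pd4 Φ i j p q x := fun p q =>
    pd3_rotate (hΦ.contDiffAt_pd (m := 3) (by norm_num) i) p q j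
  -- differentiating `Φ^{pq}` produces the Calabi tensor
  have hcalabi : ∑ p, ∑ q, (-∑ k, ∑ l, ihess Φ x p k * pd3 Φ k l j x * ihess Φ x l q)
      * pd3 Φ i p q x = -calabi Φ i j x := by
    simp only [calabi, neg_mul, Finset.sum_neg_distrib, Finset.sum_mul]
    refine congrArg _ (Finset.sum_congr rfl fun p _ => Finset.sum_congr rfl fun q _ =>
      Finset.sum_congr rfl fun k _ => Finset.sum_congr rfl fun l _ => ?_)
    rw [pd3_rotate hΦ3 k l j, ihess_comm (hΦ.of_le (by norm_num)) l q]
    ring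
  calc pd (fun y => ∑ p, ∑ q, ihess Φ y p q * pd3 Φ i p q y) j x
      = ∑ p, ∑ q, ((-∑ k, ∑ l, ihess Φ x p k * pd3 Φ k l j x * ihess Φ x l q)
          * pd3 Φ i p q x + ihess Φ x p q * pd4 Φ i j p q x) := by
        rw [pd_sum fun p _ => DifferentiableAt.fun_sum fun q _ => (hihess p q).fun_mul (hpd3 p q)]
        refine Finset.sum_congr rfl fun p _ => ?_
        rw [pd_sum fun q _ => (hihess p q).fun_mul (hpd3 p q)]
        refine Finset.sum_congr rfl fun q _ => ?_
        rw [pd_mul (hihess p q) (hpd3 p q), pd_ihess hΦ3 hunit, hpd4]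
    _ = -calabi Φ i j x + ∑ p, ∑ q, ihess Φ x p q * pd4 Φ i j p q x := by
        simp only [Finset.sum_add_distrib, hcalabi]

theorem pd2_eq_of_mongeAmpere (hΦ : ContDiffAt ℝ 4 Φ x) (hW : ContDiff ℝ 2 W)
    (hMA : ∀ᶠ y in 𝓝 x, Real.exp (-V y) = Real.exp (-W (grad Φ y)) * (hess Φ y).det)
    (i j : Fin n) :
    pd2 V i j x = What2 Φ W i j x + ∑ p, Wop Φ W p x * pd3 Φ p i j x + calabi Φ i j x
      - ∑ p, ∑ q, ihess Φ x p q * pd4 Φ i j p q x := by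
  have hpdV : pd V i =ᶠ[𝓝 x] fun y =>
      ∑ a, Wop Φ W a y * pd2 Φ a i y - ∑ p, ∑ q, ihess Φ y p q * pd3 Φ i p q y :=
    (hΦ.eventually (by simp)).and hMA.eventually_nhds |>.mono fun y ⟨hΦy, hMAy⟩ =>
      pd_eq_of_mongeAmpere (hΦy.of_le (by norm_num)) (hW.differentiable (by norm_num) _) hMAy i
  have hunit : ∀ᶠ y in 𝓝 x, IsUnit (hess Φ y).det :=
    hMA.mono fun y hy => (det_hess_pos_of_mongeAmpere hy).ne'.isUnit
  have hΦ3 : ContDiffAt ℝ 3 Φ x := hΦ.of_le (by norm_num)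
  have hWop := differentiableAt_Wop (hΦ3.of_le (by norm_num)) hW
  have hpd2 := hΦ3.differentiableAt_pd2
  have hihess := differentiableAt_ihess_apply hΦ3 hunit.self_of_nhds.ne_zero
  have hpd3 := hΦ.differentiableAt_pd3
  rw [pd2, hpdV.pd_eq, pd_sub (by fun_prop) (by fun_prop), pd_sum_Wop_mul_pd2 hΦ3 hW,
    pd_sum_ihess_mul_pd3 hΦ hunit]
  ring

end MongeAmpere

theorem stmt_3_general {n : ℕ} (Ω : Set (Fin n → ℝ)) (hΩ : IsOpen Ω)
    (Φ V W : (Fin n → ℝ) → ℝ)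
    (hΦ : ContDiffOn ℝ 5 Φ Ω)
    (hW : ContDiff ℝ 3 W)
    (hMA : ∀ x ∈ Ω, Real.exp (-V x) = Real.exp (-W (grad Φ x)) * (hess Φ x).det) :
    ∀ x ∈ Ω, ∀ i j : Fin n,
      (∑ p, ∑ q, ihess Φ x p q * pd4 Φ i j p q x)
        - (∑ p, Wop Φ W p x * pd3 Φ p i j x)
      = -(pd2 V i j x) + What2 Φ W i j x + calabi Φ i j x := by
  intro x hx i j
  rw [pd2_eq_of_mongeAmpere ((hΦ.contDiffAt (hΩ.mem_nhds hx)).of_le (by norm_num))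
    (hW.of_le (by norm_num)) (eventually_of_mem (hΩ.mem_nhds hx) hMA) i j]
  ring

/-- `L[Φ_{ij}] = −V_{ij} + Ŵ_{ij} + g_{ij}`. -/
theorem stmt_3 {n : ℕ} (Ω : Set (Fin n → ℝ)) (hΩ : IsOpen Ω)
    (Φ V W : (Fin n → ℝ) → ℝ)
    (hΦ : ContDiffOn ℝ 5 Φ Ω) (hΦconv : ConvexOn ℝ Ω Φ)
    (hpos : ∀ x ∈ Ω, (hess Φ x).PosDef)
    (hV : ContDiffOn ℝ 3 V Ω) (hW : ContDiff ℝ 3 W)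
    (hMA : ∀ x ∈ Ω, Real.exp (-V x) = Real.exp (-W (grad Φ x)) * (hess Φ x).det) :
    ∀ x ∈ Ω, ∀ i j : Fin n,
      (∑ p, ∑ q, ihess Φ x p q * pd4 Φ i j p q x)
        - (∑ p, Wop Φ W p x * pd3 Φ p i j x)
      = -(pd2 V i j x) + What2 Φ W i j x + calabi Φ i j x :=
  stmt_3_general Ω hΩ Φ V W hΦ hW hMA
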